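/- arXiv:1802.09755 — 4 statements merged into one kernel-verified Lean document; each statement's English description precedes it below -/
import Mathlib

section
/- Let A be a commutative ring, B a commutative A-algebra, and I an ideal of B such that B/Iⁿ is a flat A-module for every n ≥ 1. Let f ∈ B be a nonzerodivisor such that B/(f) is a flat A-module. Then for every integer n ≥ 1, both A-modules Iⁿ/(f·Iⁿ) and B/(f·Iⁿ) are flat, where f·Iⁿ denotes the ideal (f)·Iⁿ. -/
/-!
Multiplication by the nonzerodivisor `f` gives a short exact sequence
`0 → B/Iⁿ → B/(f·Iⁿ) → B/(f) → 0`, so `B/(f·Iⁿ)` is flat as an extension of flat modules.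
Then `0 → Iⁿ/(f·Iⁿ) → B/(f·Iⁿ) → B/Iⁿ → 0` exhibits `Iⁿ/(f·Iⁿ)` as the kernel of a surjection
between flat modules, hence flat. Both two-out-of-three properties come from tensoring with an
injection `P → Q`: a flat cokernel `N` in `0 → K → M → N → 0` keeps `P ⊗ K → P ⊗ M` injective.
-/

open LinearMap

namespace Module.Flat

variable {R K M N : Type*} [CommRing R] [AddCommGroup K] [AddCommGroup M] [AddCommGroup N]
  [Module R K] [Module R M] [Module R N] {i : K →ₗ[R] M} {p : M →ₗ[R] N}

theorem middle_of_exact (hi : Function.Injective i) (hp : Function.Surjective p)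
    (hex : Function.Exact i p) [Flat R K] [Flat R N] : Flat R M := by
  refine iff_rTensor_preserves_injective_linearMap.mpr fun P Q _ _ _ _ u hu => ?_
  have hP := lTensor_injective_of_exact_of_flat p hp i hi hex P
  have hQ := lTensor_injective_of_exact_of_flat p hp i hi hex Q
  -- four lemma on the rows `0 → P ⊗ K → P ⊗ M → P ⊗ N` and `0 → Q ⊗ K → Q ⊗ M → Q ⊗ N`
  exact injective_of_surjective_of_injective_of_injective 0 (i.lTensor P) (p.lTensor P)
    0 (i.lTensor Q) (p.lTensor Q) (0 : Unit →ₗ[R] Unit) (u.rTensor K) (u.rTensor M) (u.rTensor N)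
    (by simp) (by rw [lTensor_comp_rTensor, rTensor_comp_lTensor])
    (by rw [lTensor_comp_rTensor, rTensor_comp_lTensor])
    ((exact_zero_iff_injective _ _).mpr hP) (_root_.lTensor_exact P hex hp)
    ((exact_zero_iff_injective _ _).mpr hQ) (fun _ => ⟨(), rfl⟩)
    (rTensor_preserves_injective_linearMap u hu) (rTensor_preserves_injective_linearMap u hu)

theorem left_of_exact (hi : Function.Injective i) (hp : Function.Surjective p)
    (hex : Function.Exact i p) [Flat R M] [Flat R N] : Flat R K := by
  refine iff_rTensor_preserves_injective_linearMap.mpr fun P Q _ _ _ _ u hu => ?_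
  have hmap : Function.Injective (TensorProduct.map u i) := by
    rw [← rTensor_comp_lTensor]
    exact (rTensor_preserves_injective_linearMap u hu).comp
      (lTensor_injective_of_exact_of_flat p hp i hi hex P)
  rw [← lTensor_comp_rTensor, coe_comp] at hmap
  exact hmap.of_comp

end Module.Flat

namespace Submodule

variable {R M : Type*} [Ring R] [AddCommGroup M] [Module R M]

theorem injective_mapQ_subtype (P Q : Submodule R M) :
    Function.Injective (mapQ (P.comap Q.subtype) P Q.subtype le_rfl) :=
  LinearMap.ker_eq_bot.mp (ker_liftQ_eq_bot' _ _ (by rw [ker_comp, ker_mkQ]))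

theorem exact_mapQ_subtype_factor {P Q : Submodule R M} (h : P ≤ Q) :
    Function.Exact (mapQ (P.comap Q.subtype) P Q.subtype le_rfl) (factor h) := by
  intro y
  obtain ⟨b, rfl⟩ := Quotient.mk_surjective P y
  refine ⟨fun hb => ⟨Quotient.mk ⟨b, (Quotient.mk_eq_zero Q).mp hb⟩, rfl⟩, ?_⟩
  rintro ⟨x, hx⟩
  obtain ⟨x, rfl⟩ := Quotient.mk_surjective _ x
  rw [← hx]
  exact (Quotient.mk_eq_zero Q).mpr x.2

end Submodule

namespace Ideal

variable {B : Type*} [CommRing B]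

theorem mul_mem_span_singleton_mul_iff {f : B} (hf : f ∈ nonZeroDivisors B) {J : Ideal B}
    {b : B} : f * b ∈ span {f} * J ↔ b ∈ J := by
  refine ⟨fun hb => ?_, fun hb => mul_mem_mul (mem_span_singleton_self f) hb⟩
  obtain ⟨c, hc, hcb⟩ := mem_span_singleton_mul.mp hb
  rwa [← mul_cancel_left_mem_nonZeroDivisors hf |>.mp hcb]

def quotientMulLeft (f : B) (J : Ideal B) : B ⧸ J →ₗ[B] B ⧸ span {f} * J :=
  Submodule.mapQ J _ (LinearMap.mulLeft B f) fun _ hb => mul_mem_mul (mem_span_singleton_self f) hb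

theorem quotientMulLeft_mk (f : B) (J : Ideal B) (b : B) :
    quotientMulLeft f J (Submodule.Quotient.mk b) = Submodule.Quotient.mk (f * b) :=
  rfl

theorem injective_quotientMulLeft {f : B} (hf : f ∈ nonZeroDivisors B) (J : Ideal B) :
    Function.Injective (quotientMulLeft f J) := by
  refine LinearMap.ker_eq_bot.mp (Submodule.ker_liftQ_eq_bot' _ _ ?_)
  ext b
  rw [mem_ker, comp_apply, Submodule.mkQ_apply, Submodule.Quotient.mk_eq_zero, mulLeft_apply,
    mul_mem_span_singleton_mul_iff hf]

theorem exact_quotientMulLeft_factor (f : B) (J : Ideal B) :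
    Function.Exact (quotientMulLeft f J)
      (Submodule.factor (mul_le_left : span {f} * J ≤ span {f})) := by
  intro y
  obtain ⟨b, rfl⟩ := Submodule.Quotient.mk_surjective _ y
  rw [Submodule.mapQ_apply, LinearMap.id_apply, Submodule.Quotient.mk_eq_zero]
  constructor
  · intro hb
    obtain ⟨c, rfl⟩ := mem_span_singleton.mp hb
    exact ⟨Submodule.Quotient.mk c, rfl⟩
  · rintro ⟨x, hx⟩
    obtain ⟨c, rfl⟩ := Submodule.Quotient.mk_surjective _ x
    rw [quotientMulLeft_mk, Submodule.Quotient.eq] at hx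
    simpa using sub_mem (mul_mem_right c _ (mem_span_singleton_self f)) (mul_le_left hx)

end Ideal

/-- Let `B` be a commutative `A`-algebra and `I ⊆ B` an ideal with `B/Iⁿ` flat over `A`
for all `n ≥ 1`. If `f ∈ B` is a nonzerodivisor with `B/(f)` flat over `A`, then for every
`n ≥ 1` both `Iⁿ/(f·Iⁿ)` and `B/(f·Iⁿ)` are flat `A`-modules. -/
theorem flat_of_pullback_cartier_divisor
    (A B : Type*) [CommRing A] [CommRing B] [Algebra A B] (I : Ideal B)
    (hflat : ∀ n : ℕ, 1 ≤ n → Module.Flat A (B ⧸ (I ^ n)))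
    (f : B) (hf : f ∈ nonZeroDivisors B)
    (hBf : Module.Flat A (B ⧸ (Ideal.span {f})))
    (n : ℕ) (hn : 1 ≤ n) :
    Module.Flat A ((↥(I ^ n)) ⧸
        (Submodule.comap (I ^ n).subtype (Ideal.span {f} * I ^ n))) ∧
    Module.Flat A (B ⧸ (Ideal.span {f} * I ^ n)) := by
  have := hflat n hn
  have hle_span : Ideal.span {f} * I ^ n ≤ Ideal.span {f} := Ideal.mul_le_left
  have hle_pow : Ideal.span {f} * I ^ n ≤ I ^ n := Ideal.mul_le_right
  have hfI : Module.Flat A (B ⧸ Ideal.span {f} * I ^ n) :=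
    Module.Flat.middle_of_exact (i := (Ideal.quotientMulLeft f (I ^ n)).restrictScalars A)
      (p := (Submodule.factor hle_span).restrictScalars A)
      (Ideal.injective_quotientMulLeft hf (I ^ n)) (Submodule.factor_surjective hle_span)
      (Ideal.exact_quotientMulLeft_factor f (I ^ n))
  refine ⟨Module.Flat.left_of_exact
    (i := (Submodule.mapQ _ _ (I ^ n).subtype le_rfl).restrictScalars A)
    (p := (Submodule.factor hle_pow).restrictScalars A)
    (Submodule.injective_mapQ_subtype _ _) (Submodule.factor_surjective hle_pow)
    (Submodule.exact_mapQ_subtype_factor hle_pow), hfI⟩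
end

section
/- Let k be a field and R = k[x,y,z] with irrelevant maximal ideal M = (x,y,z). Let I = (x², xy, y³) ⊆ R. Then the saturation of I² with respect to M equals (x⁴, x³y, x²y², xy⁴, y⁶); that is, ⋃ₙ (I² : Mⁿ) = (x⁴, x³y, x²y², xy⁴, y⁶). -/
open MvPolynomial

/-- The exponent set of generators of `J`. -/
def fatSet : Set (Fin 3 →₀ ℕ) :=
  {Finsupp.single 0 4, Finsupp.single 0 3 + Finsupp.single 1 1,
    Finsupp.single 0 2 + Finsupp.single 1 2, Finsupp.single 0 1 + Finsupp.single 1 4,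
    Finsupp.single 1 6}

lemma fatSet_apply_two : ∀ s ∈ fatSet, s 2 = 0 := by
  intro s hs
  rcases hs with rfl | rfl | rfl | rfl | rfl <;> simp [Finsupp.single_apply]

lemma span_eq_monomial_span (k : Type*) [Field k] :
    (Ideal.span {X 0 ^ 4, X 0 ^ 3 * X 1, X 0 ^ 2 * X 1 ^ 2, X 0 * X 1 ^ 4, X 1 ^ 6} :
      Ideal (MvPolynomial (Fin 3) k)) =
      Ideal.span ((fun s => monomial s (1 : k)) '' fatSet) := by
  congr 1
  simp only [fatSet, Set.image_insert_eq, Set.image_singleton, X, monomial_pow, monomial_mul,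
    one_pow, one_mul, Finsupp.smul_single, smul_eq_mul, mul_one]

/-- `z` (in fact any power of `z`) is a nonzerodivisor mod `J`. -/
lemma z_pow_regular (k : Type*) [Field k] (n : ℕ) (f : MvPolynomial (Fin 3) k)
    (h : X 2 ^ n * f ∈
      (Ideal.span {X 0 ^ 4, X 0 ^ 3 * X 1, X 0 ^ 2 * X 1 ^ 2, X 0 * X 1 ^ 4, X 1 ^ 6} :
        Ideal (MvPolynomial (Fin 3) k))) :
    f ∈ (Ideal.span {X 0 ^ 4, X 0 ^ 3 * X 1, X 0 ^ 2 * X 1 ^ 2, X 0 * X 1 ^ 4, X 1 ^ 6} :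
        Ideal (MvPolynomial (Fin 3) k)) := by
  rw [span_eq_monomial_span, mem_ideal_span_monomial_image] at h ⊢
  intro m hm
  have hmem : Finsupp.single 2 n + m ∈ (X 2 ^ n * f).support := by
    rw [mem_support_iff, X_pow_eq_monomial, coeff_monomial_mul, one_mul]
    exact mem_support_iff.mp hm
  obtain ⟨si, hsi, hle⟩ := h _ hmem
  refine ⟨si, hsi, Finsupp.le_def.mpr fun i => ?_⟩
  have := Finsupp.le_def.mp hle i
  by_cases hi : i = 2
  · subst hi; simp [fatSet_apply_two si hsi]
  · simpa [Finsupp.single_apply, hi, Ne.symm hi] using this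

/-- In `R = k[x,y,z]` with irrelevant maximal ideal `M = (x,y,z)` and
`I = (x², xy, y³)`, the saturation `⋃ₙ (I² : Mⁿ)` equals `(x⁴, x³y, x²y², xy⁴, y⁶)`. -/
theorem saturation_sq_of_fatpoint_example
    (k : Type*) [Field k]
    (M I : Ideal (MvPolynomial (Fin 3) k))
    (hM : M = Ideal.span {X 0, X 1, X 2})
    (hI : I = Ideal.span {X 0 ^ 2, X 0 * X 1, X 1 ^ 3}) :
    (⋃ n : ℕ, (Submodule.colon (I ^ 2) (M ^ n) : Set (MvPolynomial (Fin 3) k))) =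
      ((Ideal.span {X 0 ^ 4, X 0 ^ 3 * X 1, X 0 ^ 2 * X 1 ^ 2, X 0 * X 1 ^ 4, X 1 ^ 6} :
        Ideal (MvPolynomial (Fin 3) k)) : Set (MvPolynomial (Fin 3) k)) := by
  set J : Ideal (MvPolynomial (Fin 3) k) :=
    Ideal.span {X 0 ^ 4, X 0 ^ 3 * X 1, X 0 ^ 2 * X 1 ^ 2, X 0 * X 1 ^ 4, X 1 ^ 6} with hJ
  have hsq : I ^ 2 = J := by
    rw [hI, pow_two, Ideal.span_mul_span']
    apply le_antisymm
    · rw [Ideal.span_le]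
      rintro x ⟨p, hp, q, hq, rfl⟩
      have h1 : (X 0 ^ 4 : MvPolynomial (Fin 3) k) ∈ J := Ideal.subset_span (by simp)
      have h2 : (X 0 ^ 3 * X 1 : MvPolynomial (Fin 3) k) ∈ J := Ideal.subset_span (by simp)
      have h3 : (X 0 ^ 2 * X 1 ^ 2 : MvPolynomial (Fin 3) k) ∈ J := Ideal.subset_span (by simp)
      have h4 : (X 0 * X 1 ^ 4 : MvPolynomial (Fin 3) k) ∈ J := Ideal.subset_span (by simp)
      have h5 : (X 1 ^ 6 : MvPolynomial (Fin 3) k) ∈ J := Ideal.subset_span (by simp)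
      simp only [Set.mem_insert_iff, Set.mem_singleton_iff] at hp hq
      rcases hp with rfl | rfl | rfl <;> rcases hq with rfl | rfl | rfl <;>
        simp only [SetLike.mem_coe]
      · have : (X 0:MvPolynomial (Fin 3) k) ^ 2 * X 0 ^ 2 = X 0 ^ 4 := by ring
        rw [this]; exact h1
      · have : (X 0:MvPolynomial (Fin 3) k) ^ 2 * (X 0 * X 1) = X 0 ^ 3 * X 1 := by ring
        rw [this]; exact h2
      · have : (X 0:MvPolynomial (Fin 3) k) ^ 2 * X 1 ^ 3 = X 1 * (X 0 ^ 2 * X 1 ^ 2) := by ring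
        rw [this]; exact Ideal.mul_mem_left _ _ h3
      · have : (X 0 * X 1 : MvPolynomial (Fin 3) k) * X 0 ^ 2 = X 0 ^ 3 * X 1 := by ring
        rw [this]; exact h2
      · have : (X 0 * X 1 : MvPolynomial (Fin 3) k) * (X 0 * X 1) = X 0 ^ 2 * X 1 ^ 2 := by ring
        rw [this]; exact h3
      · have : (X 0 * X 1 : MvPolynomial (Fin 3) k) * X 1 ^ 3 = X 0 * X 1 ^ 4 := by ring
        rw [this]; exact h4
      · have : (X 1:MvPolynomial (Fin 3) k) ^ 3 * X 0 ^ 2 = X 1 * (X 0 ^ 2 * X 1 ^ 2) := by ring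
        rw [this]; exact Ideal.mul_mem_left _ _ h3
      · have : (X 1:MvPolynomial (Fin 3) k) ^ 3 * (X 0 * X 1) = X 0 * X 1 ^ 4 := by ring
        rw [this]; exact h4
      · have : (X 1:MvPolynomial (Fin 3) k) ^ 3 * X 1 ^ 3 = X 1 ^ 6 := by ring
        rw [this]; exact h5
    · rw [hJ, Ideal.span_le]
      intro x hx
      have hx2 : (X 0 ^ 2 : MvPolynomial (Fin 3) k) ∈
          ({X 0 ^ 2, X 0 * X 1, X 1 ^ 3} : Set (MvPolynomial (Fin 3) k)) := by simp
      have hxy : (X 0 * X 1 : MvPolynomial (Fin 3) k) ∈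
          ({X 0 ^ 2, X 0 * X 1, X 1 ^ 3} : Set (MvPolynomial (Fin 3) k)) := by simp
      have hy3 : (X 1 ^ 3 : MvPolynomial (Fin 3) k) ∈
          ({X 0 ^ 2, X 0 * X 1, X 1 ^ 3} : Set (MvPolynomial (Fin 3) k)) := by simp
      simp only [Set.mem_insert_iff, Set.mem_singleton_iff] at hx
      rcases hx with rfl | rfl | rfl | rfl | rfl <;> apply Ideal.subset_span
      · exact ⟨_, hx2, _, hx2, by ring⟩
      · exact ⟨_, hx2, _, hxy, by ring⟩
      · exact ⟨_, hxy, _, hxy, by ring⟩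
      · exact ⟨_, hxy, _, hy3, by ring⟩
      · exact ⟨_, hy3, _, hy3, by ring⟩
  have hcolon : ∀ n : ℕ, Submodule.colon (I ^ 2) (M ^ n) = (J : Ideal _) := by
    intro n
    apply le_antisymm
    · intro f hf
      have hz : (X 2 : MvPolynomial (Fin 3) k) ^ n ∈ M ^ n := by
        exact Ideal.pow_mem_pow (hM ▸ Ideal.subset_span (by simp)) n
      have := Submodule.mem_colon.mp hf _ hz
      rw [smul_eq_mul, mul_comm, hsq, hJ] at this
      exact hJ ▸ z_pow_regular k n f this
    · intro f hf
      rw [Submodule.mem_colon]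
      intro p _
      rw [smul_eq_mul, hsq]
      exact Ideal.mul_mem_right _ _ hf
  simp only [hcolon, Set.iUnion_const]
end

section
/- In the polynomial ring R = k[x,y,z] over a field k, the ideal (x⁴, x³y, x²y², xy⁴, y⁶) is strictly contained in the ideal (x³, x²y², xy⁴, y⁶); in particular x³ does not belong to (x⁴, x³y, x²y², xy⁴, y⁶). Consequently, for I = (x², xy, y³) and J = (x, y²), the second symbolic power I^(2) = (x⁴, x³y, x²y², xy⁴, y⁶) is strictly smaller than J^(3) = (x³, x²y², xy⁴, y⁶). -/
open MvPolynomial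

/-- In `R = k[x,y,z]`, the ideal `(x⁴, x³y, x²y², xy⁴, y⁶)` — the second symbolic power
`I^(2)` of `I = (x², xy, y³)` — is strictly contained in `(x³, x²y², xy⁴, y⁶)` — the ideal
`J^(3)` for `J = (x, y²)`; in particular `x³` does not belong to the first ideal. -/
theorem symbolic_square_lt_example
    (k : Type*) [Field k] :
    (Ideal.span {X 0 ^ 4, X 0 ^ 3 * X 1, X 0 ^ 2 * X 1 ^ 2, X 0 * X 1 ^ 4, X 1 ^ 6} :
        Ideal (MvPolynomial (Fin 3) k)) <
      (Ideal.span {X 0 ^ 3, X 0 ^ 2 * X 1 ^ 2, X 0 * X 1 ^ 4, X 1 ^ 6} :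
        Ideal (MvPolynomial (Fin 3) k)) ∧
    (X 0 : MvPolynomial (Fin 3) k) ^ 3 ∉
      (Ideal.span {X 0 ^ 4, X 0 ^ 3 * X 1, X 0 ^ 2 * X 1 ^ 2, X 0 * X 1 ^ 4, X 1 ^ 6} :
        Ideal (MvPolynomial (Fin 3) k)) := by
  have hx3 : (X 0 : MvPolynomial (Fin 3) k) ^ 3 ∉
      (Ideal.span {X 0 ^ 4, X 0 ^ 3 * X 1, X 0 ^ 2 * X 1 ^ 2, X 0 * X 1 ^ 4, X 1 ^ 6} :
        Ideal (MvPolynomial (Fin 3) k)) := by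
    intro h
    set φ : MvPolynomial (Fin 3) k →ₐ[k] Polynomial k :=
      aeval (fun i => if i = 0 then Polynomial.X else 0) with hφ
    have hmap : φ ((X 0 : MvPolynomial (Fin 3) k) ^ 3) ∈
        Ideal.map φ.toRingHom
          (Ideal.span {X 0 ^ 4, X 0 ^ 3 * X 1, X 0 ^ 2 * X 1 ^ 2, X 0 * X 1 ^ 4, X 1 ^ 6}) :=
      Ideal.mem_map_of_mem _ h
    rw [Ideal.map_span] at hmap
    have hsub : (⇑φ.toRingHom '' {X 0 ^ 4, X 0 ^ 3 * X 1, X 0 ^ 2 * X 1 ^ 2, X 0 * X 1 ^ 4,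
        X 1 ^ 6} : Set (Polynomial k)) ⊆
        (Ideal.span ({Polynomial.X ^ 4} : Set (Polynomial k)) : Set (Polynomial k)) := by
      rintro p ⟨q, (rfl | rfl | rfl | rfl | rfl), rfl⟩
      · simpa [hφ] using Ideal.subset_span (Set.mem_singleton _)
      all_goals simp [hφ, Ideal.zero_mem]
    have him' : (Polynomial.X : Polynomial k) ^ 3 ∈
        Ideal.span ({Polynomial.X ^ 4} : Set (Polynomial k)) := by
      have := Ideal.span_le.mpr hsub hmap
      simpa [hφ] using this
    rw [Ideal.mem_span_singleton] at him'
    have hdeg := Polynomial.natDegree_le_of_dvd him' (by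
      exact pow_ne_zero 3 Polynomial.X_ne_zero)
    simp [Polynomial.natDegree_X_pow] at hdeg
  refine ⟨lt_of_le_of_ne ?_ ?_, hx3⟩
  · rw [Ideal.span_le]
    rintro p (rfl | rfl | rfl | rfl | rfl)
    · have : (X 0 : MvPolynomial (Fin 3) k) ^ 4 = X 0 * X 0 ^ 3 := by ring
      rw [this]
      exact Ideal.mul_mem_left _ _ (Ideal.subset_span (Or.inl rfl))
    · have : (X 0 : MvPolynomial (Fin 3) k) ^ 3 * X 1 = X 1 * X 0 ^ 3 := by ring
      rw [this]
      exact Ideal.mul_mem_left _ _ (Ideal.subset_span (Or.inl rfl))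
    · exact Ideal.subset_span (Or.inr (Or.inl rfl))
    · exact Ideal.subset_span (Or.inr (Or.inr (Or.inl rfl)))
    · exact Ideal.subset_span (Or.inr (Or.inr (Or.inr rfl)))
  · intro heq
    exact hx3 (heq ▸ Ideal.subset_span (Or.inl rfl))
end

section
/- Let k be an algebraically closed field of characteristic 0 and let p₁,…,p₅ be five distinct points of ℙ²(k) with no three of them collinear. Then for every integer m ≥ 1, the least degree of a nonzero homogeneous form f ∈ k[x₀,x₁,x₂] with f ∈ ⋂ᵢ I(pᵢ)ᵐ is exactly 2m. That is: there exists a nonzero homogeneous form of degree 2m lying in ⋂ᵢ I(pᵢ)ᵐ, and every nonzero homogeneous form lying in ⋂ᵢ I(pᵢ)ᵐ has degree at least 2m. -/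
/-!
The conic through the five points, raised to the `m`-th power, has degree `2m` and multiplicity
`m` at each point. For the lower bound we prove `2 ∑ aᵤ ≤ 5 d` for every nonzero form of degree `d`
vanishing to order `aᵤ` at `pᵤ` (nefness of `5L - 2 ∑ Eᵤ`), by induction on `d`. If
`aᵤ + aᵤ₊₁ ≤ d` for the five cyclically consecutive pairs, summing gives the bound. Otherwise the
line through `pᵤ` and `pᵤ₊₁` divides `f`; dividing it out lowers `d` by one and the orders at
`pᵤ, pᵤ₊₁` by at most one, and leaves the other orders alone because no three points are
collinear. Orders are read off in coordinates putting the point at `[1:0:0]`: there `f ∈ I(p)ᵃ` iff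
every monomial of `f` has degree at least `a` in `x₁, x₂`, which for a form of degree `d` means
`deg_{x₀} f + a ≤ d`, and `deg_{x₀}` is additive.
-/

open MvPolynomial

/-- The homogeneous prime ideal of the point `p ∈ ℙ²(k)`: the ideal generated by all
forms (homogeneous polynomials) vanishing at `p`. -/
noncomputable def pointIdeal {k : Type*} [Field k]
    (p : Projectivization k (Fin 3 → k)) : Ideal (MvPolynomial (Fin 3) k) :=
  Ideal.span { f : MvPolynomial (Fin 3) k |
    (∃ d : ℕ, f.IsHomogeneous d) ∧ eval p.rep f = 0 }

open Matrix

namespace MvPolynomial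

section LinearSubst

variable {σ k : Type*} [Fintype σ] [CommRing k]

noncomputable def linearSubstHom (M : Matrix σ σ k) : MvPolynomial σ k →ₐ[k] MvPolynomial σ k :=
  aeval fun i => ∑ j, M i j • X j

theorem linearSubstHom_mul (M N : Matrix σ σ k) :
    linearSubstHom (M * N) = (linearSubstHom N).comp (linearSubstHom M) := by
  refine algHom_ext fun i => ?_
  simp only [linearSubstHom, AlgHom.comp_apply, aeval_X, map_sum, map_smul, Matrix.mul_apply,
    Finset.smul_sum, Finset.sum_smul, smul_smul]
  exact Finset.sum_comm

theorem linearSubstHom_one [DecidableEq σ] :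
    linearSubstHom (1 : Matrix σ σ k) = AlgHom.id k _ := by
  refine algHom_ext fun i => ?_
  simp [linearSubstHom, Matrix.one_apply]

variable [DecidableEq σ]

noncomputable def linearSubst (M : GL σ k) : MvPolynomial σ k ≃ₐ[k] MvPolynomial σ k :=
  AlgEquiv.ofAlgHom (linearSubstHom M) (linearSubstHom ↑M⁻¹)
    (by rw [← linearSubstHom_mul, Units.inv_mul, linearSubstHom_one])
    (by rw [← linearSubstHom_mul, Units.mul_inv, linearSubstHom_one])

theorem linearSubst_symm (M : GL σ k) : (linearSubst M).symm = linearSubst M⁻¹ := rfl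

theorem eval_linearSubst (M : GL σ k) (u : σ → k) (f : MvPolynomial σ k) :
    eval u (linearSubst M f) = eval (M *ᵥ u) f := by
  change aeval u (aeval _ f) = aeval _ f
  rw [← AlgHom.comp_apply, comp_aeval]
  congr 2
  ext i
  simp [Matrix.mulVec, dotProduct]

theorem IsHomogeneous.linearSubst {f : MvPolynomial σ k} {d : ℕ} (hf : f.IsHomogeneous d)
    (M : GL σ k) : (linearSubst M f).IsHomogeneous d := by
  have := hf.aeval (fun i => ∑ j, (M : Matrix σ σ k) i j • X j) fun i =>
    (homogeneousSubmodule σ k 1).sum_mem fun j _ => Submodule.smul_mem _ _ (isHomogeneous_X k j)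
  rwa [one_mul] at this

end LinearSubst

variable {σ k : Type*}

section CommSemiring

variable [CommSemiring k]

theorem IsHomogeneous.of_X_mul {f : MvPolynomial σ k} {d : ℕ} {i : σ}
    (hf : (X i * f).IsHomogeneous (d + 1)) : f.IsHomogeneous d := by
  intro m hm
  have := hf (show coeff (Finsupp.single i 1 + m) (X i * f) ≠ 0 by rwa [coeff_X_mul])
  rw [map_add, Finsupp.weight_single, Pi.one_apply, smul_eq_mul, mul_one] at this
  omega

theorem le_sum_of_mem_span_X_image_pow {s : Finset σ} {a : ℕ} {f : MvPolynomial σ k}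
    (hf : f ∈ Ideal.span (X '' ↑s) ^ a) : ∀ m ∈ f.support, a ≤ ∑ i ∈ s, m i := by
  classical
  let K (b : ℕ) : Ideal (MvPolynomial σ k) := restrictSupportIdeal k {m | b ≤ ∑ i ∈ s, m i}
    fun _ _ hmn hm => hm.trans (Finset.sum_le_sum fun i _ => hmn i)
  have hK {b : ℕ} {g : MvPolynomial σ k} : g ∈ K b ↔ ∀ m ∈ g.support, b ≤ ∑ i ∈ s, m i :=
    Iff.rfl
  suffices Ideal.span (X '' ↑s) ^ a ≤ K a from hK.1 (this hf)
  clear hf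
  induction a with
  | zero => exact fun g _ m _ => Nat.zero_le _
  | succ a ih =>
    have hK1 : Ideal.span (X '' ↑s) ≤ K 1 := by
      rw [Ideal.span_le]
      rintro _ ⟨i, hi, rfl⟩
      refine hK.2 fun m hm => ?_
      obtain rfl : Finsupp.single i 1 = m := by
        by_contra h
        exact mem_support_iff.1 hm (by rw [coeff_X, if_neg h])
      simp [Finsupp.single_apply, Finset.mem_coe.1 hi]
    rw [pow_succ, Ideal.mul_le]
    intro g hg q hq
    refine hK.2 fun m hm => ?_
    obtain ⟨m₁, hm₁, m₂, hm₂, rfl⟩ := Finset.mem_add.1 (support_mul g q hm)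
    have h₁ : a ≤ ∑ i ∈ s, m₁ i := hK.1 (ih hg) m₁ hm₁
    have h₂ : 1 ≤ ∑ i ∈ s, m₂ i := hK.1 (hK1 hq) m₂ hm₂
    simp only [Finsupp.add_apply, Finset.sum_add_distrib]
    omega

variable [Fintype σ]

theorem IsHomogeneous.sum_eq_of_mem_support {f : MvPolynomial σ k} {d : ℕ}
    (hf : f.IsHomogeneous d) {m : σ →₀ ℕ} (hm : m ∈ f.support) : ∑ i, m i = d := by
  rw [← Finsupp.degree_eq_sum, Finsupp.degree_eq_weight_one]
  exact hf (mem_support_iff.1 hm)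

theorem IsHomogeneous.eq_single_of_mem_support {f : MvPolynomial σ k} {d : ℕ}
    (hf : f.IsHomogeneous d) {m : σ →₀ ℕ} (hm : m ∈ f.support) {t : σ}
    (hmt : ∀ i ≠ t, m i = 0) : m = Finsupp.single t d := by
  ext i
  rcases eq_or_ne i t with rfl | hi
  · rw [Finsupp.single_eq_same, ← hf.sum_eq_of_mem_support hm,
      Finset.sum_eq_single i (fun j _ hj => hmt j hj) (by simp)]
  · rw [hmt i hi, Finsupp.single_eq_of_ne hi]

theorem IsHomogeneous.eval_piSingle_one [DecidableEq σ] {f : MvPolynomial σ k} {d : ℕ}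
    (hf : f.IsHomogeneous d) (t : σ) :
    eval (Pi.single t 1) f = coeff (Finsupp.single t d) f := by
  rw [eval_eq', Finset.sum_eq_single (Finsupp.single t d)]
  · rw [Finset.prod_eq_one, mul_one]
    intro i _
    rcases eq_or_ne i t with rfl | hi
    · simp
    · simp [hi]
  · intro m hm hmt
    obtain ⟨i, hi, hmi⟩ : ∃ i ≠ t, m i ≠ 0 := by
      by_contra! h
      exact hmt (hf.eq_single_of_mem_support hm h)
    exact mul_eq_zero_of_right _ <| Finset.prod_eq_zero (Finset.mem_univ i) (by simp [hi, hmi])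
  · intro h
    rw [notMem_support_iff.1 h, zero_mul]

theorem mem_span_X_image_pow_of_le_sum {s : Finset σ} {a : ℕ} {f : MvPolynomial σ k}
    (hf : ∀ m ∈ f.support, a ≤ ∑ i ∈ s, m i) : f ∈ Ideal.span (X '' ↑s) ^ a := by
  classical
  rw [f.as_sum]
  refine Ideal.sum_mem _ fun m hm => ?_
  rw [monomial_eq, Finsupp.prod_fintype _ _ (by simp), ← Finset.prod_mul_prod_compl s,
    mul_left_comm]
  refine Ideal.mul_mem_right _ _ (Ideal.pow_le_pow_right (hf m hm) ?_)
  rw [← Finset.prod_pow_eq_pow_sum]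
  exact Ideal.prod_mem_prod fun i hi =>
    Ideal.pow_mem_pow (Ideal.subset_span (Set.mem_image_of_mem X hi)) _

theorem mem_span_X_image_pow_iff {s : Finset σ} {a : ℕ} {f : MvPolynomial σ k} :
    f ∈ Ideal.span (X '' ↑s) ^ a ↔ ∀ m ∈ f.support, a ≤ ∑ i ∈ s, m i :=
  ⟨le_sum_of_mem_span_X_image_pow, mem_span_X_image_pow_of_le_sum⟩

end CommSemiring

theorem exists_isHomogeneous_forall_eval_eq_zero [Fintype σ] [Field k] {ι : Type*} [Fintype ι]
    (d : ℕ) (v : ι → σ → k) (h : Fintype.card ι < (Fintype.card σ + d - 1).choose d) :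
    ∃ f : MvPolynomial σ k, f ≠ 0 ∧ f.IsHomogeneous d ∧ ∀ i, eval (v i) f = 0 := by
  classical
  let S := (Finset.univ : Finset σ).finsuppAntidiag d
  let V := restrictSupport k (S : Set (σ →₀ ℕ))
  let e : V ≃ₗ[k] (S →₀ k) := AddMonoidAlgebra.supportedEquivFinsupp _
  have : FiniteDimensional k V := e.symm.finiteDimensional
  have hV : Module.finrank k V = (Fintype.card σ + d - 1).choose d := by
    rw [e.finrank_eq, Module.finrank_finsupp_self, Fintype.card_coe,
      Finset.card_finsuppAntidiag_nat_eq_choose, Finset.card_univ]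
  let Φ : V →ₗ[k] (ι → k) := (LinearMap.pi fun i => (aeval (v i)).toLinearMap) ∘ₗ V.subtype
  obtain ⟨⟨f, hfS⟩, hfΦ, hf0⟩ := Submodule.exists_mem_ne_zero_of_ne_bot <|
    LinearMap.ker_ne_bot_of_finrank_lt (f := Φ) (by rwa [Module.finrank_fintype_fun_eq_card, hV])
  refine ⟨f, by simpa using hf0, fun m hm => ?_, fun i => congr_fun hfΦ i⟩
  have hmS : m ∈ S := hfS (mem_support_iff.2 hm)
  rw [Finset.mem_finsuppAntidiag] at hmS
  simpa [Finsupp.weight_eq_sum] using hmS.1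

end MvPolynomial

theorem two_mul_sum_le_mul_of_forall_add_le {n : ℕ} [NeZero n] (a : Fin n → ℕ) {c : ℕ}
    (h : ∀ u, a u + a (u + 1) ≤ c) : 2 * ∑ u, a u ≤ n * c :=
  calc 2 * ∑ u, a u = ∑ u, (a u + a (u + 1)) := by
        rw [Finset.sum_add_distrib,
          Fintype.sum_equiv (Equiv.addRight 1) (fun u => a (u + 1)) a fun _ => rfl]
        ring
    _ ≤ ∑ _u : Fin n, c := Finset.sum_le_sum fun u _ => h u
    _ = n * c := by simp

section PointIdeal

variable {k : Type*} [Field k]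

theorem exists_GL_mulVec_single_eq_pair {v w : Fin 3 → k} (h : LinearIndependent k ![v, w]) :
    ∃ M : GL (Fin 3) k, M *ᵥ Pi.single (0 : Fin 3) 1 = v ∧ M *ᵥ Pi.single (1 : Fin 3) 1 = w := by
  obtain ⟨x, hx⟩ := exists_linearIndependent_snoc_of_lt_finrank h (by simp)
  have hA : IsUnit (Matrix.of fun i j => (Fin.snoc ![v, w] x : Fin 3 → Fin 3 → k) j i) :=
    Matrix.linearIndependent_cols_iff_isUnit.1 hx
  refine ⟨hA.unit, ?_, ?_⟩ <;> ext i <;> simp [Fin.snoc]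

theorem exists_GL_mulVec_single_eq {v : Fin 3 → k} (hv : v ≠ 0) :
    ∃ M : GL (Fin 3) k, M *ᵥ Pi.single (0 : Fin 3) 1 = v := by
  obtain ⟨w, hw⟩ := exists_linearIndependent_pair_of_one_lt_finrank
    (by rw [Module.finrank_fin_fun]; decide) hv
  obtain ⟨M, hM, -⟩ := exists_GL_mulVec_single_eq_pair hw
  exact ⟨M, hM⟩

variable {p : Projectivization k (Fin 3 → k)} {M : GL (Fin 3) k} {t : Fin 3}

theorem eval_eq_zero_of_mem_pointIdeal {f : MvPolynomial (Fin 3) k} (hf : f ∈ pointIdeal p) :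
    eval p.rep f = 0 :=
  (Ideal.span_le (I := RingHom.ker (eval p.rep)).2 fun _ hg => hg.2) hf

theorem mem_pointIdeal_of_isHomogeneous {f : MvPolynomial (Fin 3) k} {d : ℕ}
    (hf : f.IsHomogeneous d) (hfp : eval p.rep f = 0) : f ∈ pointIdeal p :=
  Ideal.subset_span ⟨⟨d, hf⟩, hfp⟩

theorem map_linearSubst_pointIdeal (hM : M *ᵥ Pi.single t 1 = p.rep) :
    (pointIdeal p).map (linearSubst M) = Ideal.span (X '' ↑({t}ᶜ : Finset (Fin 3))) := by
  apply le_antisymm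
  · rw [pointIdeal, Ideal.map_span, Ideal.span_le]
    rintro _ ⟨f, ⟨⟨d, hf⟩, hfp⟩, rfl⟩
    rw [SetLike.mem_coe, mem_ideal_span_X_image]
    intro m hm
    by_contra! hm'
    have hmt := (hf.linearSubst M).eq_single_of_mem_support hm fun i hi => hm' i (by simpa using hi)
    refine mem_support_iff.1 hm ?_
    rw [hmt, ← (hf.linearSubst M).eval_piSingle_one, eval_linearSubst, hM, hfp]
  · rw [Ideal.span_le]
    rintro _ ⟨i, hi, rfl⟩
    rw [← (linearSubst M).apply_symm_apply (X i), linearSubst_symm]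
    refine Ideal.mem_map_of_mem _ (mem_pointIdeal_of_isHomogeneous
      ((isHomogeneous_X k i).linearSubst _) ?_)
    rw [eval_linearSubst, ← hM, Matrix.mulVec_mulVec, Units.inv_mul, Matrix.one_mulVec, eval_X]
    exact Pi.single_eq_of_ne (by simpa using hi) 1

theorem mem_pointIdeal_pow_iff (hM : M *ᵥ Pi.single t 1 = p.rep) {f : MvPolynomial (Fin 3) k}
    {a : ℕ} :
    f ∈ pointIdeal p ^ a ↔ ∀ m ∈ (linearSubst M f).support, a ≤ ∑ i ∈ {t}ᶜ, m i := by
  rw [← mem_span_X_image_pow_iff, ← map_linearSubst_pointIdeal hM, ← Ideal.map_pow]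
  exact (Ideal.apply_mem_of_equiv_iff (f := (linearSubst M).toRingEquiv)).symm

theorem mem_pointIdeal_pow_iff_degreeOf (hM : M *ᵥ Pi.single t 1 = p.rep)
    {f : MvPolynomial (Fin 3) k} {d a : ℕ} (hf : f.IsHomogeneous d) (hf0 : f ≠ 0) :
    f ∈ pointIdeal p ^ a ↔ degreeOf t (linearSubst M f) + a ≤ d := by
  have hsum (m) (hm : m ∈ (linearSubst M f).support) : m t + ∑ i ∈ {t}ᶜ, m i = d := by
    rw [← Fintype.sum_eq_add_sum_compl, (hf.linearSubst M).sum_eq_of_mem_support hm]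
  rw [mem_pointIdeal_pow_iff hM]
  constructor
  · intro h
    obtain ⟨m₀, hm₀⟩ :=
      support_nonempty.2 ((EmbeddingLike.map_ne_zero_iff (f := linearSubst M)).2 hf0)
    have : degreeOf t (linearSubst M f) ≤ d - a := degreeOf_le_iff.2 fun m hm => by
      have := h m hm
      have := hsum m hm
      omega
    have := h m₀ hm₀
    have := hsum m₀ hm₀
    omega
  · intro h m hm
    have := monomial_le_degreeOf t hm
    have := hsum m hm
    omega

theorem le_of_mem_pointIdeal_pow {f : MvPolynomial (Fin 3) k} {d a : ℕ} (hf : f.IsHomogeneous d)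
    (hf0 : f ≠ 0) (h : f ∈ pointIdeal p ^ a) : a ≤ d := by
  obtain ⟨M, hM⟩ := exists_GL_mulVec_single_eq p.rep_nonzero
  have := (mem_pointIdeal_pow_iff_degreeOf hM hf hf0).1 h
  omega

theorem mem_pointIdeal_pow_of_mul_mem {L g : MvPolynomial (Fin 3) k} {c e a b : ℕ}
    (hL : L.IsHomogeneous c) (hg : g.IsHomogeneous e) (hg0 : g ≠ 0)
    (hLb : L ∉ pointIdeal p ^ (b + 1)) (h : L * g ∈ pointIdeal p ^ a) :
    g ∈ pointIdeal p ^ (a - b) := by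
  obtain ⟨M, hM⟩ := exists_GL_mulVec_single_eq p.rep_nonzero
  have hL0 : L ≠ 0 := by
    rintro rfl
    exact hLb (zero_mem _)
  rw [mem_pointIdeal_pow_iff_degreeOf hM hL hL0] at hLb
  rw [mem_pointIdeal_pow_iff_degreeOf hM (hL.mul hg) (mul_ne_zero hL0 hg0), map_mul,
    degreeOf_mul_eq (EmbeddingLike.map_ne_zero_iff.2 hL0)
      (EmbeddingLike.map_ne_zero_iff.2 hg0)] at h
  have := (degreeOf_le_totalDegree _ 0).trans (hg.linearSubst M).totalDegree_le
  rw [mem_pointIdeal_pow_iff_degreeOf hM hg hg0]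
  omega

theorem mem_pointIdeal_pow_pred_of_linear_mul {L g : MvPolynomial (Fin 3) k} {e a : ℕ}
    (hL : L.IsHomogeneous 1) (hL0 : L ≠ 0) (hg : g.IsHomogeneous e) (hg0 : g ≠ 0)
    (h : L * g ∈ pointIdeal p ^ a) : g ∈ pointIdeal p ^ (a - 1) :=
  mem_pointIdeal_pow_of_mul_mem hL hg hg0
    (fun hL2 => absurd (le_of_mem_pointIdeal_pow hL hL0 hL2) (by norm_num)) h

theorem mem_pointIdeal_pow_of_mul_mem_of_eval_ne_zero {L g : MvPolynomial (Fin 3) k} {c e a : ℕ}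
    (hL : L.IsHomogeneous c) (hg : g.IsHomogeneous e) (hg0 : g ≠ 0) (hLp : eval p.rep L ≠ 0)
    (h : L * g ∈ pointIdeal p ^ a) : g ∈ pointIdeal p ^ a :=
  mem_pointIdeal_pow_of_mul_mem (b := 0) hL hg hg0
    (fun hL1 => hLp (eval_eq_zero_of_mem_pointIdeal (by simpa using hL1))) h

theorem add_le_or_exists_linear_dvd {q : Projectivization k (Fin 3 → k)} (hpq : p ≠ q)
    {f : MvPolynomial (Fin 3) k} {d a b : ℕ} (hf : f.IsHomogeneous (d + 1))
    (ha : f ∈ pointIdeal p ^ a) (hb : f ∈ pointIdeal q ^ b) :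
    a + b ≤ d + 1 ∨ ∃ L g : MvPolynomial (Fin 3) k, L.IsHomogeneous 1 ∧ L ≠ 0 ∧
      eval p.rep L = 0 ∧ eval q.rep L = 0 ∧ g.IsHomogeneous d ∧ f = L * g := by
  obtain ⟨M, hMp, hMq⟩ :=
    exists_GL_mulVec_single_eq_pair (Projectivization.linearIndependent_pair_iff_ne.2 hpq)
  have hφf := hf.linearSubst M
  -- in these coordinates `p = [1:0:0]`, `q = [0:1:0]`, and the line through them is `x₂ = 0`
  by_cases hX : linearSubst M f ∈ Ideal.span {X 2}
  · obtain ⟨G, hG⟩ := Ideal.mem_span_singleton'.1 hX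
    refine Or.inr ⟨linearSubst M⁻¹ (X 2), linearSubst M⁻¹ G,
      (isHomogeneous_X k 2).linearSubst _, by simp [X_ne_zero], ?_, ?_, ?_, ?_⟩
    · rw [eval_linearSubst, ← hMp, Matrix.mulVec_mulVec, Units.inv_mul, Matrix.one_mulVec]
      simp
    · rw [eval_linearSubst, ← hMq, Matrix.mulVec_mulVec, Units.inv_mul, Matrix.one_mulVec]
      simp
    · rw [← hG, mul_comm] at hφf
      exact hφf.of_X_mul.linearSubst _
    · rw [← map_mul, mul_comm, hG, ← linearSubst_symm, AlgEquiv.symm_apply_apply]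
  · left
    rw [← Set.image_singleton, mem_ideal_span_X_image] at hX
    push Not at hX
    obtain ⟨m, hm, hm2⟩ := hX
    have h0 := (mem_pointIdeal_pow_iff hMp).1 ha m hm
    have h1 := (mem_pointIdeal_pow_iff hMq).1 hb m hm
    have hd := hφf.sum_eq_of_mem_support hm
    have e0 := Fintype.sum_eq_add_sum_compl (0 : Fin 3) m
    have e1 := Fintype.sum_eq_add_sum_compl (1 : Fin 3) m
    rw [Fin.sum_univ_three] at hd e0 e1
    have : m 2 = 0 := hm2 2 rfl
    omega

end PointIdeal

theorem two_mul_sum_le_five_mul_of_mem_pointIdeal_pow {k : Type*} [Field k]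
    (p : Fin 5 → Projectivization k (Fin 3 → k)) (hp : Function.Injective p)
    (hgen : ∀ s : Finset (Fin 5), s.card = 3 →
      ¬ ∃ L : MvPolynomial (Fin 3) k, L ≠ 0 ∧ L.IsHomogeneous 1 ∧
        ∀ i ∈ s, eval (p i).rep L = 0)
    (d : ℕ) (f : MvPolynomial (Fin 3) k) (a : Fin 5 → ℕ) (hf0 : f ≠ 0) (hf : f.IsHomogeneous d)
    (ha : ∀ u, f ∈ pointIdeal (p u) ^ a u) :
    2 * ∑ u, a u ≤ 5 * d := by
  induction d generalizing f a with
  | zero =>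
    have (u : Fin 5) : a u = 0 := Nat.le_zero.1 (le_of_mem_pointIdeal_pow hf hf0 (ha u))
    simp [this]
  | succ d ih =>
    by_cases hcyc : ∀ u : Fin 5, a u + a (u + 1) ≤ d + 1
    · exact two_mul_sum_le_mul_of_forall_add_le a hcyc
    push Not at hcyc
    obtain ⟨i, hi⟩ := hcyc
    have hij : i ≠ i + 1 := by fin_cases i <;> decide
    obtain h | ⟨L, g, hL, hL0, hLi, hLj, hg, rfl⟩ :=
      add_le_or_exists_linear_dvd (hp.ne hij) hf (ha i) (ha (i + 1))
    · omega
    have hg0 : g ≠ 0 := right_ne_zero_of_mul hf0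
    let line : Finset (Fin 5) := {i, i + 1}
    let b (u : Fin 5) := if u ∈ line then 1 else 0
    have ha' (u : Fin 5) : g ∈ pointIdeal (p u) ^ (a u - b u) := by
      by_cases hu : u ∈ line
      · simpa [b, hu] using mem_pointIdeal_pow_pred_of_linear_mul hL hL0 hg hg0 (ha u)
      simp only [b, if_neg hu, Nat.sub_zero]
      refine mem_pointIdeal_pow_of_mul_mem_of_eval_ne_zero hL hg hg0 (fun hLu => ?_) (ha u)
      simp only [line, Finset.mem_insert, Finset.mem_singleton, not_or] at hu
      exact hgen {i, i + 1, u}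
        (Finset.card_eq_three.2 ⟨i, i + 1, u, hij, Ne.symm hu.1, Ne.symm hu.2, rfl⟩)
        ⟨L, hL0, hL, by simp [hLi, hLj, hLu]⟩
    have hb : ∑ u, b u = 2 := by
      rw [Finset.sum_ite_mem, Finset.univ_inter, Finset.sum_const, Finset.card_pair hij,
        smul_eq_mul, mul_one]
    have hsum : ∑ u, a u ≤ ∑ u, (a u - b u) + ∑ u, b u := by
      rw [← Finset.sum_add_distrib]
      exact Finset.sum_le_sum fun u _ => by omega
    have := ih g (fun u => a u - b u) hg0 hg ha'
    omega

theorem least_degree_five_general_points_general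
    (k : Type*) [Field k]
    (p : Fin 5 → Projectivization k (Fin 3 → k))
    (hp : Function.Injective p)
    (hgen : ∀ s : Finset (Fin 5), s.card = 3 →
      ¬ ∃ L : MvPolynomial (Fin 3) k, L ≠ 0 ∧ L.IsHomogeneous 1 ∧
        ∀ i ∈ s, eval (p i).rep L = 0)
    (m : ℕ) :
    (∃ f : MvPolynomial (Fin 3) k, f ≠ 0 ∧ f.IsHomogeneous (2 * m) ∧
      ∀ i, f ∈ pointIdeal (p i) ^ m) ∧
    (∀ (d : ℕ) (f : MvPolynomial (Fin 3) k), f ≠ 0 → f.IsHomogeneous d →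
      (∀ i, f ∈ pointIdeal (p i) ^ m) → 2 * m ≤ d) := by
  refine ⟨?_, fun d f hf0 hf hfm => ?_⟩
  · obtain ⟨Q, hQ0, hQ, hQp⟩ :=
      exists_isHomogeneous_forall_eval_eq_zero 2 (fun i => (p i).rep) (by decide)
    exact ⟨Q ^ m, pow_ne_zero m hQ0, hQ.pow m,
      fun i => Ideal.pow_mem_pow (mem_pointIdeal_of_isHomogeneous hQ (hQp i)) m⟩
  · have := two_mul_sum_le_five_mul_of_mem_pointIdeal_pow p hp hgen d f (fun _ => m) hf0 hf hfm
    simp only [Finset.sum_const, Finset.card_univ, Fintype.card_fin, smul_eq_mul] at this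
    omega

/-- For five distinct points of `ℙ²(k)` with no three collinear and every `m ≥ 1`, the
least degree of a nonzero homogeneous form lying in `⋂ᵢ I(pᵢ)ᵐ` is exactly `2m`: such a
form of degree `2m` exists, and every nonzero homogeneous form in `⋂ᵢ I(pᵢ)ᵐ` has degree
at least `2m`. -/
theorem least_degree_five_general_points
    (k : Type*) [Field k] [IsAlgClosed k] [CharZero k]
    (p : Fin 5 → Projectivization k (Fin 3 → k))
    (hp : Function.Injective p)
    (hgen : ∀ s : Finset (Fin 5), s.card = 3 →
      ¬ ∃ L : MvPolynomial (Fin 3) k, L ≠ 0 ∧ L.IsHomogeneous 1 ∧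
        ∀ i ∈ s, eval (p i).rep L = 0)
    (m : ℕ) (hm : 1 ≤ m) :
    (∃ f : MvPolynomial (Fin 3) k, f ≠ 0 ∧ f.IsHomogeneous (2 * m) ∧
      ∀ i, f ∈ pointIdeal (p i) ^ m) ∧
    (∀ (d : ℕ) (f : MvPolynomial (Fin 3) k), f ≠ 0 → f.IsHomogeneous d →
      (∀ i, f ∈ pointIdeal (p i) ^ m) → 2 * m ≤ d) :=
  least_degree_five_general_points_general k p hp hgen m
end
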